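/- Under the hypotheses of the Gaussian ground-state projection lemma (H Hermitian with nonnegative spectrum, gap lower bound Δ ≤ E₁ − E₀, trial state |ψ₀⟩ with ground-state overlap γ > 0, and τ ≥ (1/Δ)√(2 log(1/(εγ))) with ε ∈ (0,1]), the normalized state |ψ⟩ = e^{−τ²H²/2}|ψ₀⟩ / ‖e^{−τ²H²/2}|ψ₀⟩‖ satisfies Tr[|ψ⟩⟨ψ| O] − Tr[|E₀⟩⟨E₀| O] ≤ 2‖O‖ε for every bounded operator O. -/

import Mathlib

/-!
Write `ψ₀ = a v + w` with `w ⊥ v`. The Gaussian filter `G = exp(-τ²H²/2)` multiplies `v` by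
`e^{-τ²E₀²/2}` and, by the gap, shrinks `w` by at least `e^{-τ²(E₀+Δ)²/2}`; the choice of `τ`
makes the ratio of these factors at most `εγ`, so `Gψ₀ = α v + u` with `u ⊥ v` and
`‖u‖ ≤ ε‖α‖`. Hence the normalized state has overlap at least `1/√(1+ε²) ≥ 1 - ε²/2` with `v`.
For unit vectors the difference of expectation values is at most `2‖O‖` times the distance after
aligning phases, and that distance is `√(2(1 - |⟨ψ|v⟩|)) ≤ ε`.
-/

open Matrix
open scoped Matrix.Norms.L2Operator ComplexOrder

noncomputable def vecNorm {n : Type*} [Fintype n] (v : n → ℂ) : ℝ :=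
  Real.sqrt (star v ⬝ᵥ v).re

open scoped InnerProductSpace

section InnerProductSpace

variable {𝕜 E : Type*} [RCLike 𝕜] [NormedAddCommGroup E] [InnerProductSpace 𝕜 E]

theorem RCLike.exists_norm_eq_one_conj_mul_eq_norm (z : 𝕜) :
    ∃ c : 𝕜, ‖c‖ = 1 ∧ starRingEnd 𝕜 c * z = ‖z‖ := by
  rcases eq_or_ne z 0 with rfl | hz
  · exact ⟨1, norm_one, by simp⟩
  · refine ⟨z / ‖z‖, by simp [norm_div, hz], ?_⟩
    rw [map_div₀, RCLike.conj_ofReal, div_mul_eq_mul_div, RCLike.conj_mul, div_eq_iff (by simpa)]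
    ring

theorem norm_inner_map_self_sub_le (T : E →L[𝕜] E) (x y : E) :
    ‖⟪x, T x⟫_𝕜 - ⟪y, T y⟫_𝕜‖ ≤ ‖T‖ * (‖x‖ + ‖y‖) * ‖x - y‖ := by
  have hsplit : ⟪x, T x⟫_𝕜 - ⟪y, T y⟫_𝕜 = ⟪x - y, T x⟫_𝕜 + ⟪y, T (x - y)⟫_𝕜 := by
    simp only [inner_sub_left, map_sub, inner_sub_right]
    ring
  calc ‖⟪x, T x⟫_𝕜 - ⟪y, T y⟫_𝕜‖
      ≤ ‖x - y‖ * (‖T‖ * ‖x‖) + ‖y‖ * (‖T‖ * ‖x - y‖) := by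
        rw [hsplit]
        refine (norm_add_le _ _).trans (add_le_add ?_ ?_) <;>
          exact (norm_inner_le_norm _ _).trans (by gcongr; exact T.le_opNorm _)
    _ = ‖T‖ * (‖x‖ + ‖y‖) * ‖x - y‖ := by ring

theorem norm_inner_map_self_sub_le_of_norm_eq_one (T : E →L[𝕜] E) {x y : E} (hx : ‖x‖ = 1)
    (hy : ‖y‖ = 1) :
    ‖⟪x, T x⟫_𝕜 - ⟪y, T y⟫_𝕜‖ ≤ 2 * √2 * ‖T‖ * √(1 - ‖⟪y, x⟫_𝕜‖) := by
  obtain ⟨c, hc, hcyx⟩ := RCLike.exists_norm_eq_one_conj_mul_eq_norm ⟪y, x⟫_𝕜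
  have hcy : ‖c • y‖ = 1 := by rw [norm_smul, hc, hy, one_mul]
  have hphase : ⟪c • y, T (c • y)⟫_𝕜 = ⟪y, T y⟫_𝕜 := by
    rw [map_smul, inner_smul_left, inner_smul_right, ← mul_assoc, RCLike.conj_mul, hc]
    simp
  have hdist : ‖x - c • y‖ = √2 * √(1 - ‖⟪y, x⟫_𝕜‖) := by
    rw [← Real.sqrt_mul zero_le_two, ← Real.sqrt_sq (norm_nonneg _), @norm_sub_sq 𝕜,
      ← inner_conj_symm, inner_smul_left, hcyx, RCLike.conj_ofReal, RCLike.ofReal_re, hx, hcy]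
    ring_nf
  calc ‖⟪x, T x⟫_𝕜 - ⟪y, T y⟫_𝕜‖ = ‖⟪x, T x⟫_𝕜 - ⟪c • y, T (c • y)⟫_𝕜‖ := by rw [hphase]
    _ ≤ ‖T‖ * (‖x‖ + ‖c • y‖) * ‖x - c • y‖ := norm_inner_map_self_sub_le T x (c • y)
    _ = 2 * √2 * ‖T‖ * √(1 - ‖⟪y, x⟫_𝕜‖) := by rw [hx, hcy, hdist]; ring

theorem norm_sub_inner_smul_le {v : E} (hv : ‖v‖ = 1) (x : E) : ‖x - ⟪v, x⟫_𝕜 • v‖ ≤ ‖x‖ := by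
  have h := norm_add_sq_eq_norm_sq_add_norm_sq_of_inner_eq_zero (𝕜 := 𝕜) (⟪v, x⟫_𝕜 • v)
    (x - ⟪v, x⟫_𝕜 • v) (by
      rw [inner_smul_left, inner_sub_right, inner_smul_right, inner_self_eq_norm_sq_to_K, hv]
      simp)
  rw [add_sub_cancel] at h
  nlinarith [norm_nonneg (⟪v, x⟫_𝕜 • v), norm_nonneg x, norm_nonneg (x - ⟪v, x⟫_𝕜 • v)]

theorem overlap_normalize_add_of_inner_eq_zero {v u : E} (hv : ‖v‖ = 1) (hvu : ⟪v, u⟫_𝕜 = 0)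
    {α : 𝕜} (hα : α ≠ 0) {ε : ℝ} (hu : ‖u‖ ≤ ε * ‖α‖) :
    ‖(‖α • v + u‖⁻¹ : 𝕜) • (α • v + u)‖ = 1 ∧
      1 - ε ^ 2 / 2 ≤ ‖⟪v, (‖α • v + u‖⁻¹ : 𝕜) • (α • v + u)⟫_𝕜‖ := by
  set r := ‖α • v + u‖
  have hαpos : 0 < ‖α‖ := norm_pos_iff.mpr hα
  have hpyth : r * r = ‖α‖ * ‖α‖ + ‖u‖ * ‖u‖ := by
    rw [norm_add_sq_eq_norm_sq_add_norm_sq_of_inner_eq_zero (𝕜 := 𝕜) _ _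
      (by simp [inner_smul_left, hvu]), norm_smul, hv, mul_one]
  have hr : 0 < r := by nlinarith [norm_nonneg (α • v + u)]
  refine ⟨norm_smul_inv_norm (norm_pos_iff.mp hr), ?_⟩
  have hinner : ‖⟪v, (r⁻¹ : 𝕜) • (α • v + u)⟫_𝕜‖ = ‖α‖ / r := by
    rw [inner_smul_right, inner_add_right, inner_smul_right, hvu, inner_self_eq_norm_sq_to_K, hv]
    simp [div_eq_inv_mul, hr.le]
  rw [hinner, le_div_iff₀ hr]
  rcases le_or_gt (1 - ε ^ 2 / 2) 0 with hneg | hpos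
  · nlinarith
  have hr2 : r ^ 2 ≤ (1 + ε ^ 2) * ‖α‖ ^ 2 := by
    nlinarith [pow_le_pow_left₀ (norm_nonneg u) hu 2]
  -- `(1 - t/2)²(1 + t) = 1 - t²(3 - t)/4` with `t = ε² < 2`
  have hpoly : (1 - ε ^ 2 / 2) ^ 2 * (1 + ε ^ 2) ≤ 1 := by
    nlinarith [pow_nonneg (sq_nonneg ε) 2]
  have key : ((1 - ε ^ 2 / 2) * r) ^ 2 ≤ ‖α‖ ^ 2 := by
    nlinarith [mul_le_mul_of_nonneg_left hr2 (sq_nonneg (1 - ε ^ 2 / 2))]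
  exact (pow_le_pow_iff_left₀ (by positivity) (norm_nonneg α) two_ne_zero).mp key

theorem OrthonormalBasis.norm_le_of_forall_norm_inner_le {ι : Type*} [Fintype ι]
    (b : OrthonormalBasis ι 𝕜 E) {x y : E} {r : ℝ} (hr : 0 ≤ r)
    (h : ∀ i, ‖⟪b i, y⟫_𝕜‖ ≤ r * ‖⟪b i, x⟫_𝕜‖) : ‖y‖ ≤ r * ‖x‖ := by
  refine (pow_le_pow_iff_left₀ (norm_nonneg y) (by positivity) two_ne_zero).mp ?_
  rw [mul_pow, ← b.sum_sq_norm_inner_right, ← b.sum_sq_norm_inner_right, Finset.mul_sum]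
  gcongr with i
  simpa only [mul_pow] using pow_le_pow_left₀ (norm_nonneg _) (h i) 2

end InnerProductSpace

theorem Real.exp_neg_mul_add_sq_le {E₀ Δ τ δ : ℝ} (hE₀ : 0 ≤ E₀) (hΔ : 0 < Δ) (hδ : 0 < δ)
    (hτ : (1 / Δ) * √(2 * Real.log (1 / δ)) ≤ τ) :
    Real.exp (-(τ ^ 2 / 2 * (E₀ + Δ) ^ 2)) ≤ δ * Real.exp (-(τ ^ 2 / 2 * E₀ ^ 2)) := by
  rw [one_div_mul_eq_div, div_le_iff₀ hΔ, Real.sqrt_le_iff, one_div, Real.log_inv] at hτ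
  have hlog : -(τ ^ 2 / 2 * Δ ^ 2) ≤ Real.log δ := by nlinarith [hτ.2]
  calc Real.exp (-(τ ^ 2 / 2 * (E₀ + Δ) ^ 2))
      ≤ Real.exp (-(τ ^ 2 / 2 * Δ ^ 2) + -(τ ^ 2 / 2 * E₀ ^ 2)) := by
        gcongr
        nlinarith [mul_nonneg (mul_nonneg (sq_nonneg τ) hE₀) hΔ.le]
    _ ≤ δ * Real.exp (-(τ ^ 2 / 2 * E₀ ^ 2)) := by
        rw [Real.exp_add]
        gcongr
        exact (Real.exp_le_exp.mpr hlog).trans (Real.exp_log hδ).le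

section Matrix

variable {n : Type*} [Fintype n]

theorem Matrix.trace_vecMulVec_mul {R : Type*} [CommSemiring R] (x y : n → R)
    (O : Matrix n n R) : (vecMulVec x y * O).trace = y ⬝ᵥ O *ᵥ x := by
  rw [vecMulVec_mul, trace_vecMulVec, dotProduct_comm, dotProduct_mulVec]

theorem vecNorm_eq_norm_toLp (x : n → ℂ) : vecNorm x = ‖WithLp.toLp 2 x‖ := by
  rw [@norm_eq_sqrt_re_inner ℂ, EuclideanSpace.inner_toLp_toLp, dotProduct_comm]
  rfl

theorem star_dotProduct_eq_inner (x y : n → ℂ) :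
    star x ⬝ᵥ y = ⟪WithLp.toLp 2 x, WithLp.toLp 2 y⟫_ℂ := by
  rw [EuclideanSpace.inner_toLp_toLp, dotProduct_comm]

theorem star_dotProduct_self_eq_one {x : n → ℂ} (hx : vecNorm x = 1) : star x ⬝ᵥ x = 1 := by
  rw [star_dotProduct_eq_inner, inner_self_eq_norm_sq_to_K, ← vecNorm_eq_norm_toLp, hx]
  simp

theorem overlap_normalize_add_of_star_dotProduct_eq_zero {v u : n → ℂ} (hv : vecNorm v = 1)
    (hvu : star v ⬝ᵥ u = 0) {α : ℂ} (hα : α ≠ 0) {ε : ℝ} (hu : vecNorm u ≤ ε * ‖α‖) {ψ : n → ℂ}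
    (hψ : ψ = ((vecNorm (α • v + u) : ℝ) : ℂ)⁻¹ • (α • v + u)) :
    vecNorm ψ = 1 ∧ 1 - ε ^ 2 / 2 ≤ ‖star v ⬝ᵥ ψ‖ := by
  rw [vecNorm_eq_norm_toLp] at hv hu
  rw [star_dotProduct_eq_inner] at hvu
  rw [hψ, vecNorm_eq_norm_toLp, star_dotProduct_eq_inner, vecNorm_eq_norm_toLp]
  exact overlap_normalize_add_of_inner_eq_zero hv hvu hα hu

theorem Matrix.IsHermitian.star_dotProduct_mulVec_of_mulVec_eq_smul {H : Matrix n n ℂ}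
    (hH : H.IsHermitian) {v : n → ℂ} {E₀ : ℝ} (hEv : H *ᵥ v = (E₀ : ℂ) • v) (u : n → ℂ) :
    star v ⬝ᵥ H *ᵥ u = E₀ * (star v ⬝ᵥ u) := by
  rw [dotProduct_mulVec, ← hH.eq, ← star_mulVec, hEv, star_smul, smul_dotProduct, smul_eq_mul,
    Complex.star_def, Complex.conj_ofReal]

def Matrix.EigenvaluesGeOnOrthogonal (H : Matrix n n ℂ) (v : n → ℂ) (E : ℝ) : Prop :=
  ∀ (μ : ℝ) (w : n → ℂ), w ≠ 0 → H *ᵥ w = (μ : ℂ) • w → star v ⬝ᵥ w = 0 → E ≤ μ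

/-- Removing the `v`-component of an eigenvector `u` keeps it an eigenvector: a nonzero
`v`-component forces the eigenvalue of `u` to be that of `v`. -/
theorem Matrix.EigenvaluesGeOnOrthogonal.le_of_star_dotProduct_ne_zero {H : Matrix n n ℂ}
    {v : n → ℂ} {E E₀ : ℝ} (hgap : H.EigenvaluesGeOnOrthogonal v E) (hH : H.IsHermitian)
    (hv : star v ⬝ᵥ v = 1) (hEv : H *ᵥ v = (E₀ : ℂ) • v) {μ : ℝ} {u w : n → ℂ}
    (hu : H *ᵥ u = (μ : ℂ) • u) (hw : star v ⬝ᵥ w = 0) (huw : star u ⬝ᵥ w ≠ 0) : E ≤ μ := by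
  set u' := u - (star v ⬝ᵥ u) • v
  have hu'w : star u' ⬝ᵥ w = star u ⬝ᵥ w := by
    simp [u', star_sub, sub_dotProduct, star_smul, smul_dotProduct, hw]
  have hvu' : star v ⬝ᵥ u' = 0 := by simp [u', dotProduct_sub, dotProduct_smul, hv]
  have hμ : (μ : ℂ) * (star v ⬝ᵥ u) = E₀ * (star v ⬝ᵥ u) := by
    rw [← hH.star_dotProduct_mulVec_of_mulVec_eq_smul hEv, hu, dotProduct_smul, smul_eq_mul]
  have hu' : H *ᵥ u' = (μ : ℂ) • u' := by
    rw [mulVec_sub, mulVec_smul, hu, hEv, smul_smul, mul_comm, ← hμ, smul_sub, smul_smul, mul_comm]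
  exact hgap μ u' (fun h => huw (by rw [← hu'w, h, star_zero, zero_dotProduct])) hu' hvu'

variable [DecidableEq n]

theorem Matrix.pow_mulVec_of_mulVec_eq_smul {R : Type*} [CommSemiring R] {M : Matrix n n R}
    {u : n → R} {μ : R} (h : M *ᵥ u = μ • u) (k : ℕ) : (M ^ k) *ᵥ u = μ ^ k • u := by
  induction k with
  | zero => simp
  | succ k ih => rw [pow_succ', ← mulVec_mulVec, ih, mulVec_smul, h, smul_smul, pow_succ]

theorem Matrix.exp_mulVec_of_mulVec_eq_smul {𝕂 : Type*} [RCLike 𝕂] {M : Matrix n n 𝕂}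
    {u : n → 𝕂} {μ : 𝕂} (h : M *ᵥ u = μ • u) :
    NormedSpace.exp M *ᵥ u = NormedSpace.exp μ • u := by
  let applyAt : Matrix n n 𝕂 →L[𝕂] n → 𝕂 :=
    LinearMap.toContinuousLinearMap (LinearMap.applyₗ u ∘ₗ Matrix.toLin'.toLinearMap)
  refine ((NormedSpace.exp_series_hasSum_exp' (𝕂 := 𝕂) M).mapL applyAt).unique ?_
  convert (NormedSpace.exp_series_hasSum_exp' (𝕂 := 𝕂) μ).smul_const u using 2 with k
  change ((k.factorial⁻¹ : 𝕂) • M ^ k) *ᵥ u = _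
  rw [smul_mulVec, pow_mulVec_of_mulVec_eq_smul h, smul_smul, smul_eq_mul]

theorem Matrix.gaussian_mulVec_of_mulVec_eq_smul {H : Matrix n n ℂ} {u : n → ℂ} {μ : ℝ}
    (hu : H *ᵥ u = (μ : ℂ) • u) (c : ℝ) :
    NormedSpace.exp (-(c : ℂ) • (H * H)) *ᵥ u = (Real.exp (-(c * μ ^ 2)) : ℂ) • u := by
  rw [exp_mulVec_of_mulVec_eq_smul (μ := ((-(c * μ ^ 2) : ℝ) : ℂ)), ← Complex.exp_eq_exp_ℂ,
    Complex.ofReal_exp]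
  rw [smul_mulVec, ← mulVec_mulVec, hu, mulVec_smul, hu, smul_smul, smul_smul]
  push_cast
  ring_nf

theorem Matrix.IsHermitian.isHermitian_gaussian {H : Matrix n n ℂ} (hH : H.IsHermitian) (c : ℝ) :
    (NormedSpace.exp (-(c : ℂ) • (H * H))).IsHermitian :=
  IsSelfAdjoint.exp <| .smul (.neg (Complex.conj_ofReal c)) <|
    (IsSelfAdjoint.commute_iff hH hH).mp (Commute.refl H)

theorem Matrix.IsHermitian.norm_gaussian_mulVec_le {H : Matrix n n ℂ} (hH : H.IsHermitian)
    {v : n → ℂ} {E E₀ : ℝ} (hgap : H.EigenvaluesGeOnOrthogonal v E) (hv : star v ⬝ᵥ v = 1)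
    (hEv : H *ᵥ v = (E₀ : ℂ) • v) (hE : 0 ≤ E) {c : ℝ} (hc : 0 ≤ c) {w : n → ℂ}
    (hw : star v ⬝ᵥ w = 0) :
    vecNorm (NormedSpace.exp (-(c : ℂ) • (H * H)) *ᵥ w) ≤ Real.exp (-(c * E ^ 2)) * vecNorm w := by
  set G := NormedSpace.exp (-(c : ℂ) • (H * H))
  rw [vecNorm_eq_norm_toLp, vecNorm_eq_norm_toLp]
  refine hH.eigenvectorBasis.norm_le_of_forall_norm_inner_le (Real.exp_pos _).le fun i => ?_
  set b := hH.eigenvectorBasis i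
  set μ := hH.eigenvalues i
  have hb : H *ᵥ b = (μ : ℂ) • b := hH.mulVec_eigenvectorBasis i
  have hGb : ⟪b, WithLp.toLp 2 (G *ᵥ w)⟫_ℂ = Real.exp (-(c * μ ^ 2)) * ⟪b, WithLp.toLp 2 w⟫_ℂ := by
    have hG := (isSymmetric_toEuclideanLin_iff.mpr (hH.isHermitian_gaussian c)) b (WithLp.toLp 2 w)
    have hGb' : toEuclideanLin G b = (Real.exp (-(c * μ ^ 2)) : ℂ) • b := by
      rw [toLpLin_apply, gaussian_mulVec_of_mulVec_eq_smul hb]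
      rfl
    rw [hGb', inner_smul_left, Complex.conj_ofReal] at hG
    exact hG.symm
  rw [hGb, norm_mul, Complex.norm_of_nonneg (Real.exp_pos _).le]
  rcases eq_or_ne ⟪b, WithLp.toLp 2 w⟫_ℂ 0 with h0 | h0
  · simp [h0]
  have hEμ : E ≤ μ := hgap.le_of_star_dotProduct_ne_zero hH hv hEv hb hw
    (by rwa [star_dotProduct_eq_inner])
  gcongr

theorem Matrix.re_trace_vecMulVec_star_mul_sub_le (O : Matrix n n ℂ) {x y : n → ℂ}
    (hx : vecNorm x = 1) (hy : vecNorm y = 1) :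
    ((vecMulVec x (star x) * O).trace - (vecMulVec y (star y) * O).trace).re
      ≤ 2 * √2 * ‖O‖ * √(1 - ‖star y ⬝ᵥ x‖) := by
  rw [trace_vecMulVec_mul, trace_vecMulVec_mul, star_dotProduct_eq_inner x,
    star_dotProduct_eq_inner y, star_dotProduct_eq_inner y]
  rw [vecNorm_eq_norm_toLp] at hx hy
  exact (Complex.re_le_norm _).trans
    (norm_inner_map_self_sub_le_of_norm_eq_one (toEuclideanCLM (𝕜 := ℂ) O) hx hy)

theorem Matrix.IsHermitian.gaussian_projection_overlap {H : Matrix n n ℂ} (hH : H.IsHermitian)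
    {E₀ Δ ε τ : ℝ} (hΔ : 0 < Δ) {v : n → ℂ} (hv : vecNorm v = 1) (hEv : H *ᵥ v = (E₀ : ℂ) • v)
    (hE₀ : 0 ≤ E₀) (hgap : H.EigenvaluesGeOnOrthogonal v (E₀ + Δ)) {ψ₀ : n → ℂ}
    (hψ₀ : vecNorm ψ₀ = 1) (hγ : 0 < ‖star ψ₀ ⬝ᵥ v‖) (hε : 0 < ε)
    (hτ : (1 / Δ) * √(2 * Real.log (1 / (ε * ‖star ψ₀ ⬝ᵥ v‖))) ≤ τ) {ψt ψ : n → ℂ}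
    (hψt : ψt = NormedSpace.exp (-((τ ^ 2 / 2 : ℝ) : ℂ) • (H * H)) *ᵥ ψ₀)
    (hψ : ψ = ((vecNorm ψt : ℝ) : ℂ)⁻¹ • ψt) :
    vecNorm ψ = 1 ∧ 1 - ε ^ 2 / 2 ≤ ‖star v ⬝ᵥ ψ‖ := by
  set c := τ ^ 2 / 2
  set G := NormedSpace.exp (-(c : ℂ) • (H * H))
  have hvv := star_dotProduct_self_eq_one hv
  set a := star v ⬝ᵥ ψ₀
  set w := ψ₀ - a • v
  have hw : star v ⬝ᵥ w = 0 := by simp [w, a, dotProduct_sub, dotProduct_smul, hvv]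
  have hGv : G *ᵥ v = (Real.exp (-(c * E₀ ^ 2)) : ℂ) • v := gaussian_mulVec_of_mulVec_eq_smul hEv c
  have hGw : star v ⬝ᵥ G *ᵥ w = 0 := by
    rw [(hH.isHermitian_gaussian c).star_dotProduct_mulVec_of_mulVec_eq_smul hGv, hw, mul_zero]
  set α : ℂ := a * Real.exp (-(c * E₀ ^ 2))
  have hdecomp : ψt = α • v + G *ᵥ w := by
    rw [hψt, show ψ₀ = a • v + w by simp [w], mulVec_add, mulVec_smul, hGv, smul_smul]
  have ha : ‖a‖ = ‖star ψ₀ ⬝ᵥ v‖ := by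
    rw [← norm_star a, star_dotProduct]
  have hα : α ≠ 0 := mul_ne_zero (norm_pos_iff.mp (ha ▸ hγ)) (by simp)
  have hw1 : vecNorm w ≤ 1 := by
    rw [← hψ₀, vecNorm_eq_norm_toLp, vecNorm_eq_norm_toLp]
    have h := norm_sub_inner_smul_le (𝕜 := ℂ) ((vecNorm_eq_norm_toLp v).symm.trans hv) (WithLp.toLp 2 ψ₀)
    rwa [← star_dotProduct_eq_inner] at h
  have hsmall : vecNorm (G *ᵥ w) ≤ ε * ‖α‖ :=
    calc vecNorm (G *ᵥ w) ≤ Real.exp (-(c * (E₀ + Δ) ^ 2)) * vecNorm w :=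
          hH.norm_gaussian_mulVec_le hgap hvv hEv (by linarith) (by positivity) hw
      _ ≤ Real.exp (-(c * (E₀ + Δ) ^ 2)) := mul_le_of_le_one_right (Real.exp_pos _).le hw1
      _ ≤ ε * ‖a‖ * Real.exp (-(c * E₀ ^ 2)) :=
          Real.exp_neg_mul_add_sq_le hE₀ hΔ (mul_pos hε (ha ▸ hγ)) (ha ▸ hτ)
      _ = ε * ‖α‖ := by
          rw [norm_mul, Complex.norm_of_nonneg (Real.exp_pos _).le, mul_assoc]
  rw [hdecomp] at hψ
  exact overlap_normalize_add_of_star_dotProduct_eq_zero hv hGw hα hsmall hψ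

end Matrix

theorem stmt_5_general {N : ℕ} (H : Matrix (Fin N) (Fin N) ℂ) (hH : H.IsHermitian)
    (E₀ Δ ε τ γ : ℝ) (hΔ : 0 < Δ)
    (v : Fin N → ℂ) (hv : vecNorm v = 1) (hEv : H.mulVec v = (E₀ : ℂ) • v)
    (hE₀ : 0 ≤ E₀)
    (hgap : ∀ (μ : ℝ) (w : Fin N → ℂ), w ≠ 0 → H.mulVec w = (μ : ℂ) • w →
      star v ⬝ᵥ w = 0 → E₀ + Δ ≤ μ)
    (ψ₀ : Fin N → ℂ) (hψ₀ : vecNorm ψ₀ = 1)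
    (hγ : γ = ‖star ψ₀ ⬝ᵥ v‖) (hγpos : 0 < γ)
    (hε : 0 < ε)
    (hτ : (1 / Δ) * Real.sqrt (2 * Real.log (1 / (ε * γ))) ≤ τ)
    (ψt ψ : Fin N → ℂ)
    (hψt : ψt = (NormedSpace.exp (-((τ ^ 2 / 2 : ℝ) : ℂ) • (H * H))).mulVec ψ₀)
    (hψ : ψ = ((vecNorm ψt : ℝ) : ℂ)⁻¹ • ψt)
    (O : Matrix (Fin N) (Fin N) ℂ) :
    ((vecMulVec ψ (star ψ) * O).trace - (vecMulVec v (star v) * O).trace).re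
      ≤ 2 * ‖O‖ * ε := by
  subst hγ
  obtain ⟨hψ1, hoverlap⟩ := hH.gaussian_projection_overlap hΔ hv hEv hE₀ hgap hψ₀ hγpos hε hτ hψt hψ
  calc ((vecMulVec ψ (star ψ) * O).trace - (vecMulVec v (star v) * O).trace).re
      ≤ 2 * √2 * ‖O‖ * √(1 - ‖star v ⬝ᵥ ψ‖) := re_trace_vecMulVec_star_mul_sub_le O hψ1 hv
    _ ≤ 2 * √2 * ‖O‖ * √(ε ^ 2 / 2) := by gcongr; linarith
    _ = 2 * ‖O‖ * ε := by
        rw [Real.sqrt_div' _ zero_le_two, Real.sqrt_sq hε.le]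
        field_simp

/-- ground state observable projection: under the Gaussian ground-state
projection hypotheses, the normalized state ψ = e^{−τ²H²/2}ψ₀ / ‖e^{−τ²H²/2}ψ₀‖ satisfies
Tr[|ψ⟩⟨ψ| O] − Tr[|E₀⟩⟨E₀| O] ≤ 2‖O‖ε for every observable O. -/
theorem stmt_5 {N : ℕ} (H : Matrix (Fin N) (Fin N) ℂ) (hH : H.IsHermitian)
    (hpos : H.PosSemidef)
    (E₀ Δ ε τ γ : ℝ) (hΔ : 0 < Δ)
    (v : Fin N → ℂ) (hv : vecNorm v = 1) (hEv : H.mulVec v = (E₀ : ℂ) • v)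
    (hE₀ : 0 ≤ E₀)
    (hgap : ∀ (μ : ℝ) (w : Fin N → ℂ), w ≠ 0 → H.mulVec w = (μ : ℂ) • w →
      star v ⬝ᵥ w = 0 → E₀ + Δ ≤ μ)
    (ψ₀ : Fin N → ℂ) (hψ₀ : vecNorm ψ₀ = 1)
    (hγ : γ = ‖star ψ₀ ⬝ᵥ v‖) (hγpos : 0 < γ)
    (hε : 0 < ε) (hε1 : ε ≤ 1)
    (hτ : (1 / Δ) * Real.sqrt (2 * Real.log (1 / (ε * γ))) ≤ τ)
    (ψt ψ : Fin N → ℂ)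
    (hψt : ψt = (NormedSpace.exp (-((τ ^ 2 / 2 : ℝ) : ℂ) • (H * H))).mulVec ψ₀)
    (hψ : ψ = ((vecNorm ψt : ℝ) : ℂ)⁻¹ • ψt)
    (O : Matrix (Fin N) (Fin N) ℂ) :
    ((vecMulVec ψ (star ψ) * O).trace - (vecMulVec v (star v) * O).trace).re
      ≤ 2 * ‖O‖ * ε :=
  stmt_5_general H hH E₀ Δ ε τ γ hΔ v hv hEv hE₀ hgap ψ₀ hψ₀ hγ hγpos hε hτ ψt ψ hψt hψ O
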